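/- Every continuous tangent vector field on the 2-sphere S² has a zero (Hairy Ball Theorem). -/

import Mathlib

/-!
Milnor's analytic proof. Approximate the field by a smooth one, normalise it and extend it to a
tangent field `u` homogeneous of degree one, with `‖u x‖ = ‖x‖`. For small `t` the map
`x ↦ x + t • u x` is injective on the shell `1 ≤ ‖x‖ ≤ 2` and, being a local diffeomorphism that
multiplies norms by `√(1 + t²)`, maps each sphere of radius `r` onto the sphere of radius
`√(1 + t²) r`. Hence by change of variables `∫ det (1 + t • Du)` over the shell, a polynomial in
`t`, equals `(1 + t²)^(n/2)` times the volume of the shell, which is impossible for odd `n`.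
-/

open Set Filter Topology Metric MeasureTheory Module Polynomial
open scoped NNReal Pointwise RealInnerProductSpace ContDiff

theorem Polynomial.exists_eval_eq_integral {α : Type*} [MeasurableSpace α] (μ : Measure α)
    (φ : ℝ → α → ℝ) (n : ℕ) (hφ : ∀ x, ∃ p : ℝ[X], p.natDegree ≤ n ∧ ∀ t, p.eval t = φ t x)
    (hint : ∀ t, Integrable (φ t) μ) :
    ∃ P : ℝ[X], ∀ t, P.eval t = ∫ x, φ t x ∂μ := by
  set s := Finset.range (n + 1)
  have hinj : InjOn (Nat.cast : ℕ → ℝ) s := fun i _ j _ h => Nat.cast_injective h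
  refine ⟨Lagrange.interpolate s Nat.cast fun i => ∫ x, φ i x ∂μ, fun t => ?_⟩
  -- Lagrange interpolation at the nodes `0, …, n` is exact on each `φ · x`
  have hpoint : ∀ x, φ t x = ∑ i ∈ s, φ i x * (Lagrange.basis s Nat.cast i).eval t := by
    intro x
    obtain ⟨p, hpn, hp⟩ := hφ x
    have hdeg : p.degree < s.card := by
      rw [Finset.card_range]
      exact (degree_le_of_natDegree_le hpn).trans_lt (WithBot.coe_lt_coe.mpr n.lt_succ_self)
    rw [← hp, Lagrange.eq_interpolate hinj hdeg, Lagrange.interpolate_apply]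
    simp [eval_finsetSum, hp]
  simp only [Lagrange.interpolate_apply, eval_finsetSum, eval_mul, eval_C, hpoint]
  rw [integral_finsetSum s fun i _ => (hint (i : ℕ)).mul_const _]
  simp only [integral_mul_const]

theorem LinearMap.exists_eval_eq_det_one_add_smul {K V : Type*} [Field K] [AddCommGroup V]
    [Module K V] [FiniteDimensional K V] (A : V →ₗ[K] V) :
    ∃ p : K[X], p.natDegree ≤ finrank K V ∧ ∀ t, p.eval t = (1 + t • A).det := by
  set b := finBasis K V
  refine ⟨((X : K[X]) • (toMatrix b b A).map C + (1 : Matrix _ _ K).map C).det, ?_, fun t => ?_⟩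
  · simpa using natDegree_det_X_add_C_le (toMatrix b b A) 1
  · rw [← det_toMatrix b, ← coe_evalRingHom, RingHom.map_det]
    congr 1
    ext i j
    simp [Matrix.one_apply, apply_ite (eval t), add_comm]
    ring

theorem Polynomial.not_eventually_eval_eq_mul_sqrt_one_add_sq_pow (P : ℝ[X]) {c : ℝ}
    (hc : c ≠ 0) {n : ℕ} (hn : Odd n) :
    ¬ ∀ᶠ t in 𝓝[>] (0 : ℝ), P.eval t = c * √(1 + t ^ 2) ^ n := by
  intro h
  obtain ⟨ε, hε, hsub⟩ := mem_nhdsGT_iff_exists_Ioo_subset.mp h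
  have hsq : P ^ 2 = C (c ^ 2) * (1 + X ^ 2) ^ n := by
    refine eq_of_infinite_eval_eq _ _ ((Ioo_infinite hε).mono fun t ht => ?_)
    have hPt : P.eval t = c * √(1 + t ^ 2) ^ n := hsub ht
    simp only [mem_ofPred_eq, eval_pow, eval_mul, eval_C, eval_add, eval_one, eval_X, hPt]
    rw [mul_pow, ← pow_mul, mul_comm n, pow_mul, Real.sq_sqrt (by positivity)]
  have hsqC : (P.map (algebraMap ℝ ℂ)) ^ 2
      = C ((c : ℂ) ^ 2) * ((X - C Complex.I) ^ n * (X - C (-Complex.I)) ^ n) := by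
    rw [← Polynomial.map_pow, hsq]
    simp only [Polynomial.map_mul, Polynomial.map_pow, Polynomial.map_add, Polynomial.map_one,
      map_X, map_C, Complex.coe_algebraMap, Complex.ofReal_pow, ← mul_pow]
    congr 2
    rw [show (X - C Complex.I) * (X - C (-Complex.I)) = X ^ 2 - C (Complex.I ^ 2) by
      rw [C_pow, C_neg]; ring, Complex.I_sq, C_neg, C_1]
    ring
  have hne : C ((c : ℂ) ^ 2) * ((X - C Complex.I) ^ n * (X - C (-Complex.I)) ^ n) ≠ 0 := by
    simp [hc, X_sub_C_ne_zero, X_add_C_ne_zero]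
  have hPne : P.map (algebraMap ℝ ℂ) ≠ 0 := fun h0 => hne (by rw [← hsqC, h0]; ring)
  -- `I` is a root of even multiplicity on the left and of multiplicity `n` on the right
  have hmult := congrArg (rootMultiplicity Complex.I) hsqC
  rw [pow_two, rootMultiplicity_mul (mul_ne_zero hPne hPne), rootMultiplicity_mul hne,
    rootMultiplicity_mul (right_ne_zero_of_mul hne), rootMultiplicity_C,
    rootMultiplicity_X_sub_C_pow, rootMultiplicity_eq_zero (p := (X - C (-Complex.I)) ^ n)]
    at hmult
  · obtain ⟨k, rfl⟩ := hn
    omega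
  · simp [Complex.ext_iff]

theorem isCompact_preimage_norm_Icc {E : Type*} [NormedAddCommGroup E] [ProperSpace E] (a b : ℝ) :
    IsCompact (norm ⁻¹' Icc a b : Set E) :=
  isCompact_of_isClosed_isBounded (isClosed_Icc.preimage continuous_norm)
    ((isBounded_closedBall (x := (0 : E)) (r := b)).subset fun x hx => by simpa using hx.2)

section NormedSpace

variable {E : Type*} [NormedAddCommGroup E] [NormedSpace ℝ E]

theorem injOn_add_smul_of_lipschitzOnWith {u : E → E} {s : Set E} {K : ℝ≥0}
    (hu : LipschitzOnWith K u s) {t : ℝ} (ht : |t| * K < 1) :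
    InjOn (fun x => x + t • u x) s := by
  intro x hx y hy hxy
  have h : x + t • u x = y + t • u y := hxy
  have hdiff : x - y = t • (u y - u x) :=
    calc x - y = (x + t • u x) - (y + t • u y) + (t • u y - t • u x) := by abel
      _ = t • (u y - u x) := by rw [h, sub_self, zero_add, smul_sub]
  have hle : ‖x - y‖ ≤ |t| * K * ‖x - y‖ :=
    calc ‖x - y‖ = |t| * ‖u y - u x‖ := by rw [hdiff, norm_smul, Real.norm_eq_abs]
      _ ≤ |t| * (K * ‖y - x‖) := by
          gcongr
          simpa only [dist_eq_norm] using hu.dist_le_mul y hy x hx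
      _ = |t| * K * ‖x - y‖ := by rw [norm_sub_rev]; ring
  have : ‖x - y‖ = 0 := by nlinarith [norm_nonneg (x - y)]
  exact sub_eq_zero.mp (norm_eq_zero.mp this)

theorem exists_continuousLinearEquiv_coe_eq_one_add [CompleteSpace E] {A : E →L[ℝ] E}
    (hA : ‖A‖ < 1) : ∃ e : E ≃L[ℝ] E, (e : E →L[ℝ] E) = 1 + A := by
  have hA' : ‖-A‖ < 1 := by rwa [norm_neg]
  exact ⟨ContinuousLinearEquiv.unitsEquiv ℝ E (Units.oneSub (-A) hA'),
    (Units.val_oneSub _ hA').trans (sub_neg_eq_add 1 A)⟩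

theorem ContinuousLinearMap.det_one_add_pos_of_norm_lt_one [FiniteDimensional ℝ E]
    {A : E →L[ℝ] E} (hA : ‖A‖ < 1) : 0 < (1 + A).det := by
  have hne : ∀ s ∈ Icc (0 : ℝ) 1, (1 + s • A).det ≠ 0 := by
    intro s hs
    have hsA : ‖s • A‖ < 1 := by
      rw [norm_smul, Real.norm_of_nonneg hs.1]
      nlinarith [norm_nonneg A, hs.2]
    obtain ⟨e, he⟩ := exists_continuousLinearEquiv_coe_eq_one_add hsA
    rw [← he]
    exact e.toLinearEquiv.isUnit_det'.ne_zero
  have hcont : ContinuousOn (fun s : ℝ => (1 + s • A).det) (Icc 0 1) :=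
    (continuous_det.comp (by fun_prop)).continuousOn
  by_contra! hle
  obtain ⟨s, hs, hs0⟩ := intermediate_value_Icc' zero_le_one hcont
    ⟨by simpa using hle, by simp [ContinuousLinearMap.det]⟩
  exact hne s hs hs0

theorem image_sphere_eq_sphere_of_hasStrictFDerivAt [FiniteDimensional ℝ E]
    (hE : 1 < finrank ℝ E) {f : E → E} {c r : ℝ} (hc : 0 < c) (hr : 0 ≤ r)
    (hf : ∀ x ∈ sphere (0 : E) r, ∃ f' : E ≃L[ℝ] E, HasStrictFDerivAt f (f' : E →L[ℝ] E) x)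
    (hnorm : ∀ x, ‖f x‖ = c * ‖x‖) :
    f '' sphere 0 r = sphere 0 (c * r) := by
  have hmem : ∀ x, f x ∈ sphere (0 : E) (c * r) ↔ x ∈ sphere (0 : E) r := by
    intro x
    simp [hnorm, hc.ne']
  set S := f '' sphere (0 : E) r
  have hsub : S ⊆ sphere 0 (c * r) := image_subset_iff.2 fun x hx => (hmem x).2 hx
  -- `S` is closed and, by the inverse function theorem, relatively open in the target sphere
  have hint : S ⊆ interior (range f) := by
    rintro _ ⟨x, hx, rfl⟩
    obtain ⟨f', hf'⟩ := hf x hx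
    rw [mem_interior_iff_mem_nhds, ← hf'.map_nhds_eq_of_equiv]
    exact range_mem_map
  have hrel : interior (range f) ∩ sphere 0 (c * r) ⊆ S := by
    rintro _ ⟨hy, hys⟩
    obtain ⟨x, rfl⟩ := interior_subset hy
    exact ⟨x, (hmem x).1 hys, rfl⟩
  have hclosed : IsClosed S :=
    ((isCompact_sphere 0 r).image_of_continuousOn fun x hx =>
      (hf x hx).elim fun _ h => h.continuousAt.continuousWithinAt).isClosed
  have hrank := one_lt_rank_of_one_lt_finrank hE
  obtain ⟨x₀, hx₀⟩ := (isConnected_sphere hrank 0 hr).nonempty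
  refine hsub.antisymm fun y hy => ?_
  by_contra hyS
  obtain ⟨z, hz, hzS, hzS'⟩ := (isConnected_sphere hrank 0 (by positivity)).isPreconnected
    _ _ isOpen_interior hclosed.isOpen_compl (fun z _ => (em (z ∈ S)).imp (hint ·) id)
    ⟨f x₀, (hmem x₀).2 hx₀, hint (mem_image_of_mem f hx₀)⟩ ⟨y, hy, hyS⟩
  exact hzS' (hrel ⟨hzS, hz⟩)

theorem image_preimage_norm_eq_smul {f : E → E} {I : Set ℝ} {c : ℝ} (hc : 0 < c)
    (hf : ∀ r ∈ I, f '' sphere 0 r = sphere 0 (c * r)) :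
    f '' (norm ⁻¹' I) = c • (norm ⁻¹' I) := by
  have hunion : norm ⁻¹' I = ⋃ r ∈ I, sphere (0 : E) r := by
    ext x
    simp
  rw [hunion, image_iUnion₂, smul_set_iUnion₂]
  refine iUnion₂_congr fun r hr => ?_
  rw [hf r hr, smul_sphere' hc.ne', smul_zero, Real.norm_of_nonneg hc.le]

theorem continuousOn_det_one_add_smul_fderiv [FiniteDimensional ℝ E] {u : E → E} {s : Set E}
    (hu : ∀ x ∈ s, ContDiffAt ℝ 1 u x) (t : ℝ) :
    ContinuousOn (fun x => (1 + t • fderiv ℝ u x).det) s := fun x hx =>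
  (ContinuousLinearMap.continuous_det.continuousAt.comp (continuousAt_const.add
    (((hu x hx).fderiv_right (m := 0) (by simp)).continuousAt.const_smul t))).continuousWithinAt

theorem integral_det_fderiv_eq_of_image_eq_smul [FiniteDimensional ℝ E] [MeasurableSpace E]
    [BorelSpace E] (μ : Measure E) [μ.IsAddHaarMeasure] {s : Set E} (hs : MeasurableSet s)
    {f : E → E} {f' : E → E →L[ℝ] E} (hf' : ∀ x ∈ s, HasFDerivWithinAt f (f' x) s x)
    (hinj : InjOn f s) {c : ℝ} (hc : 0 ≤ c) (himage : f '' s = c • s)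
    (hdet : ∀ x ∈ s, 0 ≤ (f' x).det) (hint : IntegrableOn (fun x => (f' x).det) s μ) :
    ∫ x in s, (f' x).det ∂μ = c ^ finrank ℝ E * μ.real s := by
  have hlin : ENNReal.ofReal (∫ x in s, (f' x).det ∂μ)
      = ENNReal.ofReal (c ^ finrank ℝ E) * μ s := by
    rw [ofReal_integral_eq_lintegral_ofReal hint ((ae_restrict_iff' hs).2 (.of_forall hdet)),
      ← Measure.addHaar_smul_of_nonneg μ hc, ← himage,
      ← lintegral_abs_det_fderiv_eq_addHaar_image μ hs hf' hinj]
    exact setLIntegral_congr_fun hs fun x hx => by rw [abs_of_nonneg (hdet x hx)]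
  have := congrArg ENNReal.toReal hlin
  rwa [ENNReal.toReal_ofReal (setIntegral_nonneg hs hdet), ENNReal.toReal_mul,
    ENNReal.toReal_ofReal (by positivity)] at this

end NormedSpace

section InnerProductSpace

variable {E : Type*} [NormedAddCommGroup E] [InnerProductSpace ℝ E]

theorem norm_add_smul_of_inner_eq_zero {x y : E} (h : ⟪y, x⟫ = 0) (hy : ‖y‖ = ‖x‖) (t : ℝ) :
    ‖x + t • y‖ = √(1 + t ^ 2) * ‖x‖ := by
  have hsq : ‖x + t • y‖ ^ 2 = (1 + t ^ 2) * ‖x‖ ^ 2 := by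
    rw [sq, norm_add_sq_eq_norm_sq_add_norm_sq_real
        (by rw [inner_smul_right, real_inner_comm, h, mul_zero]),
      norm_smul, hy, Real.norm_eq_abs]
    nlinarith [sq_abs t]
  rw [← Real.sqrt_sq (norm_nonneg _), hsq, Real.sqrt_mul (by positivity),
    Real.sqrt_sq (norm_nonneg _)]

theorem eq_zero_of_inner_eq_zero_of_finrank_eq_one (hE : finrank ℝ E = 1) {x v : E}
    (hx : x ≠ 0) (hv : ⟪v, x⟫ = 0) : v = 0 := by
  obtain ⟨c, rfl⟩ := (finrank_eq_one_iff_of_nonzero' x hx).mp hE v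
  rw [real_inner_smul_left, real_inner_self_eq_norm_sq] at hv
  simp [(mul_eq_zero.mp hv).resolve_right (by simpa using hx)]

theorem norm_sub_inner_smul_sub_le {x v : E} (hx : ‖x‖ = 1) (hv : ⟪v, x⟫ = 0) (g : E) :
    ‖(g - ⟪g, x⟫ • x) - v‖ ≤ 2 * ‖g - v‖ :=
  calc ‖(g - ⟪g, x⟫ • x) - v‖ = ‖(g - v) - ⟪g - v, x⟫ • x‖ := by
        rw [inner_sub_left, hv, sub_zero, sub_right_comm]
    _ ≤ ‖g - v‖ + ‖⟪g - v, x⟫ • x‖ := norm_sub_le _ _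
    _ ≤ ‖g - v‖ + ‖g - v‖ := by
        rw [norm_smul, hx, mul_one, Real.norm_eq_abs]
        gcongr
        simpa [hx] using abs_real_inner_le_norm (g - v) x
    _ = 2 * ‖g - v‖ := by ring

noncomputable def homogeneousUnitExtension (w : E → E) (x : E) : E :=
  ‖x‖ • ‖w (‖x‖⁻¹ • x)‖⁻¹ • w (‖x‖⁻¹ • x)

variable {w : E → E}

theorem norm_homogeneousUnitExtension (hw : ∀ y ∈ sphere (0 : E) 1, w y ≠ 0) (x : E) :
    ‖homogeneousUnitExtension w x‖ = ‖x‖ := by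
  rcases eq_or_ne x 0 with rfl | hx
  · simp [homogeneousUnitExtension]
  have hwx : w (‖x‖⁻¹ • x) ≠ 0 := hw _ (by simpa using norm_smul_inv_norm (𝕜 := ℝ) hx)
  simp [homogeneousUnitExtension, norm_smul, hwx]

theorem inner_homogeneousUnitExtension_self (hw : ∀ y ∈ sphere (0 : E) 1, ⟪w y, y⟫ = 0)
    (x : E) : ⟪homogeneousUnitExtension w x, x⟫ = 0 := by
  rcases eq_or_ne x 0 with rfl | hx
  · simp
  have hwx := hw _ (by simpa using norm_smul_inv_norm (𝕜 := ℝ) hx)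
  rw [real_inner_smul_right] at hwx
  simp [homogeneousUnitExtension, real_inner_smul_left,
    (mul_eq_zero.mp hwx).resolve_left (by simpa using hx)]

theorem contDiffAt_homogeneousUnitExtension {n : WithTop ℕ∞}
    (hw : ∀ y ∈ sphere (0 : E) 1, ContDiffAt ℝ n w y) (hw0 : ∀ y ∈ sphere (0 : E) 1, w y ≠ 0)
    {x : E} (hx : x ≠ 0) : ContDiffAt ℝ n (homogeneousUnitExtension w) x := by
  have hxs : ‖x‖⁻¹ • x ∈ sphere (0 : E) 1 := by simpa using norm_smul_inv_norm (𝕜 := ℝ) hx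
  have hproj : ContDiffAt ℝ n (fun z : E => ‖z‖⁻¹ • z) x :=
    ((contDiffAt_norm ℝ hx).inv (norm_ne_zero_iff.mpr hx)).smul contDiffAt_id
  have hwproj : ContDiffAt ℝ n (fun z : E => w (‖z‖⁻¹ • z)) x :=
    (hw _ hxs).comp (f := fun z : E => ‖z‖⁻¹ • z) x hproj
  exact (contDiffAt_norm ℝ hx).smul
    (((hwproj.norm ℝ (hw0 _ hxs)).inv (norm_ne_zero_iff.mpr (hw0 _ hxs))).smul hwproj)

variable [FiniteDimensional ℝ E]

theorem integral_det_one_add_smul_fderiv_eq [MeasurableSpace E] [BorelSpace E] (μ : Measure E)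
    [μ.IsAddHaarMeasure] (hE : 1 < finrank ℝ E) {u : E → E} (hnorm : ∀ x, ‖u x‖ = ‖x‖)
    (hinner : ∀ x, ⟪u x, x⟫ = 0) {a b : ℝ} (ha : 0 ≤ a)
    (hu : ∀ x ∈ norm ⁻¹' Icc a b, ContDiffAt ℝ 1 u x) {K : ℝ≥0}
    (hK : LipschitzOnWith K u (norm ⁻¹' Icc a b)) {M : ℝ}
    (hM : ∀ x ∈ norm ⁻¹' Icc a b, ‖fderiv ℝ u x‖ ≤ M) {t : ℝ} (ht : 0 ≤ t)
    (htK : t * K < 1) (htM : t * M < 1) :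
    ∫ x in norm ⁻¹' Icc a b, (1 + t • fderiv ℝ u x).det ∂μ
      = √(1 + t ^ 2) ^ finrank ℝ E * μ.real (norm ⁻¹' Icc a b) := by
  set A : Set E := norm ⁻¹' Icc a b
  have hA : IsCompact A := isCompact_preimage_norm_Icc a b
  have hf : ∀ x ∈ A, HasStrictFDerivAt (fun x => x + t • u x) (1 + t • fderiv ℝ u x) x :=
    fun x hx =>
      (hasStrictFDerivAt_id x).add (((hu x hx).hasStrictFDerivAt one_ne_zero).const_smul t)
  have hsmall : ∀ x ∈ A, ‖t • fderiv ℝ u x‖ < 1 := fun x hx => by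
    rw [norm_smul, Real.norm_of_nonneg ht]
    exact (mul_le_mul_of_nonneg_left (hM x hx) ht).trans_lt htM
  have hequiv : ∀ x ∈ A, ∃ f' : E ≃L[ℝ] E,
      HasStrictFDerivAt (fun x => x + t • u x) (f' : E →L[ℝ] E) x := fun x hx => by
    obtain ⟨e, he⟩ := exists_continuousLinearEquiv_coe_eq_one_add (hsmall x hx)
    exact ⟨e, he ▸ hf x hx⟩
  have hsqrt : 0 < √(1 + t ^ 2) := by positivity
  have himage : (fun x => x + t • u x) '' A = √(1 + t ^ 2) • A :=
    image_preimage_norm_eq_smul hsqrt fun r hr =>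
      image_sphere_eq_sphere_of_hasStrictFDerivAt hE hsqrt (ha.trans hr.1)
        (fun x hx => hequiv x (by simpa [A, mem_sphere_zero_iff_norm.mp hx] using hr))
        fun x => norm_add_smul_of_inner_eq_zero (hinner x) (hnorm x) t
  exact integral_det_fderiv_eq_of_image_eq_smul μ hA.isClosed.measurableSet
    (fun x hx => (hf x hx).hasFDerivAt.hasFDerivWithinAt)
    (injOn_add_smul_of_lipschitzOnWith hK (by rwa [abs_of_nonneg ht])) hsqrt.le himage
    (fun x hx => (ContinuousLinearMap.det_one_add_pos_of_norm_lt_one (hsmall x hx)).le)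
    ((continuousOn_det_one_add_smul_fderiv hu t).integrableOn_compact hA)

theorem even_finrank_of_norm_eq_of_inner_eq_zero (hE : 1 < finrank ℝ E) {u : E → E}
    (hnorm : ∀ x, ‖u x‖ = ‖x‖) (hinner : ∀ x, ⟪u x, x⟫ = 0)
    (hu : ∀ x ≠ 0, ContDiffAt ℝ 1 u x) : Even (finrank ℝ E) := by
  by_contra hodd
  rw [Nat.not_even_iff_odd] at hodd
  have : Nontrivial E := Module.nontrivial_of_finrank_pos (zero_lt_one.trans hE)
  set A : Set E := norm ⁻¹' Icc 1 2
  have hA : IsCompact A := isCompact_preimage_norm_Icc 1 2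
  have huA : ∀ x ∈ A, ContDiffAt ℝ 1 u x := fun x hx =>
    hu x (norm_pos_iff.mp (zero_lt_one.trans_le hx.1))
  obtain ⟨K, hK⟩ : ∃ K, LipschitzOnWith K u A :=
    LocallyLipschitzOn.exists_lipschitzOnWith_of_compact hA fun x hx =>
      let ⟨K, s, hs, hK⟩ := (huA x hx).exists_lipschitzOnWith
      ⟨K, s, nhdsWithin_le_nhds hs, hK⟩
  obtain ⟨M, hM⟩ := hA.exists_bound_of_continuousOn fun x hx =>
    ((huA x hx).fderiv_right (m := 0) (by simp)).continuousAt.continuousWithinAt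
  borelize E
  set μ : Measure E := Measure.addHaar
  have hμA : 0 < μ.real A := by
    obtain ⟨x, hx⟩ := (NormedSpace.sphere_nonempty (E := E) (x := 0)).mpr
      (show (0 : ℝ) ≤ 3 / 2 by norm_num)
    have hpos : 0 < μ (norm ⁻¹' Ioo 1 2) := (isOpen_Ioo.preimage continuous_norm).measure_pos μ
      ⟨x, by norm_num [mem_sphere_zero_iff_norm.mp hx]⟩
    exact ENNReal.toReal_pos
      (hpos.trans_le (measure_mono (preimage_mono Ioo_subset_Icc_self))).ne' hA.measure_lt_top.ne
  obtain ⟨P, hP⟩ := Polynomial.exists_eval_eq_integral (μ.restrict A)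
    (fun t x => (1 + t • fderiv ℝ u x).det) (finrank ℝ E)
    (fun x => LinearMap.exists_eval_eq_det_one_add_smul _)
    fun t => (continuousOn_det_one_add_smul_fderiv huA t).integrableOn_compact hA
  refine P.not_eventually_eval_eq_mul_sqrt_one_add_sq_pow hμA.ne' hodd ?_
  have hsmall : ∀ᶠ t : ℝ in 𝓝 0, t * K < 1 ∧ t * M < 1 :=
    ((continuous_mul_const _).continuousAt.eventually_lt continuousAt_const (by simp)).and
      ((continuous_mul_const _).continuousAt.eventually_lt continuousAt_const (by simp))
  filter_upwards [nhdsWithin_le_nhds hsmall, self_mem_nhdsWithin] with t ⟨htK, htM⟩ ht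
  rw [hP, mul_comm]
  exact integral_det_one_add_smul_fderiv_eq μ hE hnorm hinner zero_le_one huA hK hM ht.le htK htM

end InnerProductSpace

section Approximation

variable {E F : Type*} [NormedAddCommGroup E] [NormedSpace ℝ E]

def contDiffRestrictions (K : Set E) : Subalgebra ℝ C(K, ℝ) where
  carrier := {f | ∃ g : E → ℝ, ContDiff ℝ ∞ g ∧ ∀ x : K, f x = g x}
  mul_mem' := by
    rintro f₁ f₂ ⟨g₁, hg₁, he₁⟩ ⟨g₂, hg₂, he₂⟩
    exact ⟨g₁ * g₂, hg₁.mul hg₂, fun x => by simp [he₁ x, he₂ x]⟩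
  add_mem' := by
    rintro f₁ f₂ ⟨g₁, hg₁, he₁⟩ ⟨g₂, hg₂, he₂⟩
    exact ⟨g₁ + g₂, hg₁.add hg₂, fun x => by simp [he₁ x, he₂ x]⟩
  algebraMap_mem' c := ⟨fun _ => c, contDiff_const, fun _ => rfl⟩

theorem contDiffRestrictions_separatesPoints (K : Set E) :
    (contDiffRestrictions K).SeparatesPoints := by
  intro x y hxy
  obtain ⟨ℓ, hℓ⟩ := SeparatingDual.exists_separating_of_ne (R := ℝ) (Subtype.coe_ne_coe.mpr hxy)
  exact ⟨_, ⟨⟨fun z => ℓ z, by fun_prop⟩, ⟨ℓ, ℓ.contDiff, fun _ => rfl⟩, rfl⟩, hℓ⟩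

theorem exists_contDiff_abs_sub_lt {K : Set E} [CompactSpace K] {f : K → ℝ} (hf : Continuous f)
    {ε : ℝ} (hε : 0 < ε) : ∃ g : E → ℝ, ContDiff ℝ ∞ g ∧ ∀ x : K, |g x - f x| < ε := by
  obtain ⟨⟨_, g, hg, hfg⟩, hclose⟩ :=
    ContinuousMap.exists_mem_subalgebra_near_continuous_of_separatesPoints _
      (contDiffRestrictions_separatesPoints K) f hf ε hε
  exact ⟨g, hg, fun x => by simpa [hfg x] using hclose x⟩

variable [NormedAddCommGroup F] [InnerProductSpace ℝ F] [FiniteDimensional ℝ F]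

theorem exists_contDiff_norm_sub_lt {K : Set E} [CompactSpace K] {f : K → F} (hf : Continuous f)
    {ε : ℝ} (hε : 0 < ε) : ∃ g : E → F, ContDiff ℝ ∞ g ∧ ∀ x : K, ‖g x - f x‖ < ε := by
  set b := stdOrthonormalBasis ℝ F
  set δ := ε / (finrank ℝ F + 1)
  have hδ : 0 < δ := by positivity
  choose g hg hgf using fun i => exists_contDiff_abs_sub_lt (K := K)
    (f := fun x => ⟪b i, f x⟫) (by fun_prop) hδ
  refine ⟨fun y => ∑ i, g i y • b i, ContDiff.sum fun i _ => (hg i).smul contDiff_const,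
    fun x => ?_⟩
  calc ‖∑ i, g i x • b i - f x‖ = ‖∑ i, (g i x - ⟪b i, f x⟫) • b i‖ := by
        conv_lhs => rw [← b.sum_repr' (f x)]
        simp [sub_smul]
    _ ≤ ∑ i, |g i x - ⟪b i, f x⟫| := by
        refine (norm_sum_le _ _).trans_eq (Finset.sum_congr rfl fun i _ => ?_)
        rw [norm_smul, b.orthonormal.1 i, mul_one, Real.norm_eq_abs]
    _ ≤ ∑ _i : Fin (finrank ℝ F), δ := Finset.sum_le_sum fun i _ => (hgf i x).le
    _ < ε := by
        rw [Finset.sum_const, Finset.card_univ, Fintype.card_fin, nsmul_eq_mul,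
          mul_div_assoc', div_lt_iff₀ (by positivity)]
        nlinarith

end Approximation

section HairyBall

variable {E : Type*} [NormedAddCommGroup E] [InnerProductSpace ℝ E] [FiniteDimensional ℝ E]

theorem exists_mem_sphere_eq_zero_of_contDiffAt (hE : Odd (finrank ℝ E)) {w : E → E}
    (hw : ∀ x ∈ sphere (0 : E) 1, ContDiffAt ℝ 1 w x)
    (htang : ∀ x ∈ sphere (0 : E) 1, ⟪w x, x⟫ = 0) : ∃ x ∈ sphere (0 : E) 1, w x = 0 := by
  have : Nontrivial E := Module.nontrivial_of_finrank_pos hE.pos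
  rcases (show 1 ≤ finrank ℝ E from hE.pos).lt_or_eq with hE1 | hE1
  · by_contra! hw0
    exact Nat.not_even_iff_odd.mpr hE (even_finrank_of_norm_eq_of_inner_eq_zero hE1
      (norm_homogeneousUnitExtension hw0) (inner_homogeneousUnitExtension_self htang)
      fun x hx => contDiffAt_homogeneousUnitExtension hw hw0 hx)
  · obtain ⟨x, hx⟩ := (NormedSpace.sphere_nonempty (E := E) (x := 0)).mpr zero_le_one
    exact ⟨x, hx, eq_zero_of_inner_eq_zero_of_finrank_eq_one hE1.symm
      (ne_zero_of_mem_sphere one_ne_zero ⟨x, hx⟩) (htang x hx)⟩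

theorem exists_contDiff_inner_eq_zero_ne_zero [Nontrivial E] {v : sphere (0 : E) 1 → E}
    (hv : Continuous v) (htang : ∀ x, ⟪v x, x⟫ = 0) (hv0 : ∀ x, v x ≠ 0) :
    ∃ w : E → E, ContDiff ℝ ∞ w ∧ (∀ x ∈ sphere (0 : E) 1, ⟪w x, x⟫ = 0) ∧
      ∀ x ∈ sphere (0 : E) 1, w x ≠ 0 := by
  have : CompactSpace (sphere (0 : E) 1) := isCompact_iff_compactSpace.mp (isCompact_sphere 0 1)
  have : Nonempty (sphere (0 : E) 1) :=
    ((NormedSpace.sphere_nonempty (E := E) (x := 0)).mpr zero_le_one).to_subtype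
  obtain ⟨x₀, -, hx₀⟩ := isCompact_univ.exists_isMinOn univ_nonempty hv.norm.continuousOn
  have hm : 0 < ‖v x₀‖ := norm_pos_iff.mpr (hv0 x₀)
  obtain ⟨g, hg, hgv⟩ := exists_contDiff_norm_sub_lt hv (half_pos hm)
  refine ⟨fun x => g x - ⟪g x, x⟫ • x, hg.sub ((hg.inner ℝ contDiff_id).smul contDiff_id),
    fun x hx => ?_, fun x hx h0 => ?_⟩
  · rw [inner_sub_left, real_inner_smul_left, real_inner_self_eq_norm_sq,
      mem_sphere_zero_iff_norm.mp hx]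
    ring
  · set y : sphere (0 : E) 1 := ⟨x, hx⟩
    have hle : ‖v y‖ ≤ 2 * ‖g x - v y‖ := by
      simpa [h0] using norm_sub_inner_smul_sub_le (mem_sphere_zero_iff_norm.mp hx) (htang y) (g x)
    have hmin : ‖v x₀‖ ≤ ‖v y‖ := hx₀ (mem_univ y)
    have happrox : ‖g x - v y‖ < ‖v x₀‖ / 2 := hgv y
    linarith

theorem exists_eq_zero_of_inner_eq_zero_of_odd_finrank (hE : Odd (finrank ℝ E))
    {v : sphere (0 : E) 1 → E} (hv : Continuous v) (htang : ∀ x, ⟪v x, x⟫ = 0) :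
    ∃ x, v x = 0 := by
  have : Nontrivial E := Module.nontrivial_of_finrank_pos hE.pos
  by_contra! hv0
  obtain ⟨w, hw, hwt, hw0⟩ := exists_contDiff_inner_eq_zero_ne_zero hv htang hv0
  obtain ⟨x, hx, hwx⟩ :=
    exists_mem_sphere_eq_zero_of_contDiffAt hE (fun x _ => (hw.of_le (by simp)).contDiffAt) hwt
  exact hw0 x hx hwx

end HairyBall

/-- **The Hairy Ball Theorem.** Every continuous tangent vector field on the unit sphere
`S² ⊂ ℝ³` has a zero: if `v` assigns continuously to each `x ∈ S²` a vector `v x ∈ ℝ³` with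
`⟪v x, x⟫ = 0`, then `v` vanishes somewhere. -/
theorem hairy_ball
    (v : Metric.sphere (0 : EuclideanSpace ℝ (Fin 3)) 1 → EuclideanSpace ℝ (Fin 3))
    (hv : Continuous v)
    (htang : ∀ x, inner (𝕜 := ℝ) (v x) (x : EuclideanSpace ℝ (Fin 3)) = 0) :
    ∃ x, v x = 0 :=
  exists_eq_zero_of_inner_eq_zero_of_odd_finrank (by simp [finrank_euclideanSpace]; decide) hv htang
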